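/- Let T be a trace whose events use k distinct thread identifiers, and let r be a read event in T. Then the cardinality of W1(r) is at most k, and the cardinality of W2(r) is at most k. -/

import Mathlib

/-- Operations an event can perform: read/write on a shared variable,
    acquire/release on a mutex. Variables and mutexes are named by naturals. -/
inductive Op : Type where
  | read : ℕ → Op
  | write : ℕ → Op
  | acq : ℕ → Op
  | rel : ℕ → Op
deriving DecidableEq

/-- An event carries a thread identifier, a trace position and an operation. -/
structure Event : Type where
  tid : ℕ
  pos : ℕ
  op : Op
deriving DecidableEq

/-- A trace is well formed if the recorded position of each event equals its index. -/
def WellFormed (T : List Event) : Prop :=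
  ∀ i : Fin T.length, (T.get i).pos = (i : ℕ)

/-- Program-order edge: same thread, earlier position. -/
def POEdge (T : List Event) (e f : Event) : Prop :=
  e ∈ T ∧ f ∈ T ∧ e.tid = f.tid ∧ e.pos < f.pos

/-- Release-acquire edge: a release of mutex `y` before an acquire of `y` in another
    thread, with no intervening acquire of `y` by a thread other than the releasing one. -/
def RADEdge (T : List Event) (e f : Event) : Prop :=
  e ∈ T ∧ f ∈ T ∧ ∃ y, e.op = Op.rel y ∧ f.op = Op.acq y ∧
    e.tid ≠ f.tid ∧ e.pos < f.pos ∧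
    ∀ g ∈ T, e.pos < g.pos → g.pos < f.pos → g.tid ≠ e.tid → g.op ≠ Op.acq y

/-- The happens-before relation: smallest (strict) partial order containing PO and RAD,
    i.e. the transitive closure of the PO and RAD edges. -/
def HB (T : List Event) : Event → Event → Prop :=
  Relation.TransGen (fun e f => POEdge T e f ∨ RADEdge T e f)

/-- Two events are unsynchronized if neither happens before the other. -/
def Unsync (T : List Event) (e f : Event) : Prop := ¬ HB T e f ∧ ¬ HB T f e

/-- Unsynchronized WRD candidates for the read `r` on variable `x`. -/
def W1 (T : List Event) (x : ℕ) (r : Event) : Set Event :=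
  {w | w ∈ T ∧ w.op = Op.write x ∧ Unsync T r w ∧
    ∀ w' ∈ T, w' ≠ w → w'.op = Op.write x → Unsync T r w' → ¬ HB T w w'}

/-- Synchronized WRD candidates for the read `r` on variable `x`. -/
def W2 (T : List Event) (x : ℕ) (r : Event) : Set Event :=
  {w | w ∈ T ∧ w.op = Op.write x ∧ HB T w r ∧
    ∀ w' ∈ T, w' ≠ w → w'.op = Op.write x → HB T w' r → ¬ HB T w w'}

/-- All WRD candidates. -/
def Wcand (T : List Event) (x : ℕ) (r : Event) : Set Event :=
  W1 T x r ∪ W2 T x r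

/-- Write-read dependency edge: the nearest preceding write on the same variable. -/
def WRDEdge (T : List Event) (w r : Event) : Prop :=
  w ∈ T ∧ r ∈ T ∧ ∃ x, w.op = Op.write x ∧ r.op = Op.read x ∧ w.pos < r.pos ∧
    ∀ g ∈ T, w.pos < g.pos → g.pos < r.pos → g.op ≠ Op.write x

/-- The schedulable happens-before relation: smallest partial order containing
    PO, RAD and WRD edges. -/
def SHB (T : List Event) : Event → Event → Prop :=
  Relation.TransGen (fun e f => POEdge T e f ∨ RADEdge T e f ∨ WRDEdge T e f)

/-- Every read event enjoys an initial write. -/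
def InitialWrites (T : List Event) : Prop :=
  ∀ r ∈ T, ∀ x, r.op = Op.read x → (W2 T x r).Nonempty

/-- A some-schedulable happens-before relation: any (strict) partial order satisfying
    PO and RAD such that every read is preceded by some of its WRD candidates. -/
structure SomeSHB (T : List Event) (R : Event → Event → Prop) : Prop where
  trans : ∀ {a b c : Event}, R a b → R b c → R a c
  irrefl : ∀ a : Event, ¬ R a a
  po : ∀ {e f : Event}, POEdge T e f → R e f
  rad : ∀ {e f : Event}, RADEdge T e f → R e f
  wrd : ∀ r ∈ T, ∀ x, r.op = Op.read x → ∃ w ∈ Wcand T x r, R w r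

/-- A WRD-candidate edge of the graph derived from `T` (labelled `W(r)`). -/
def CandEdge (T : List Event) (w r : Event) : Prop :=
  r ∈ T ∧ ∃ x, r.op = Op.read x ∧ w ∈ Wcand T x r

/-- An edge of the graph derived from `T`: an HB edge or a WRD-candidate edge. -/
def GEdge (T : List Event) (e f : Event) : Prop :=
  HB T e f ∨ CandEdge T e f

/-- A path in the graph derived from `T`: a nonempty sequence of edges
    visiting pairwise distinct nodes. -/
def GPath (T : List Event) (e f : Event) : Prop :=
  ∃ (n : ℕ) (p : Fin (n + 1) → Event), 0 < n ∧ Function.Injective p ∧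
    p 0 = e ∧ p (Fin.last n) = f ∧
    ∀ i : Fin n, GEdge T (p i.castSucc) (p i.succ)

/-! Both `W1 T x r` and `W2 T x r` are antichains for happens-before, being sets of
HB-maximal writes. In a well-formed trace two distinct events of one thread sit at
distinct positions and are therefore ordered by program order, so an antichain has at
most one event per thread. -/

namespace WellFormed

variable {T : List Event}

theorem eq_of_pos_eq (hwf : WellFormed T) {e f : Event} (he : e ∈ T) (hf : f ∈ T)
    (hpos : e.pos = f.pos) : e = f := by
  obtain ⟨i, rfl⟩ := List.get_of_mem he
  obtain ⟨j, rfl⟩ := List.get_of_mem hf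
  rw [hwf i, hwf j] at hpos
  rw [Fin.ext hpos]

theorem hb_or_hb_of_tid_eq (hwf : WellFormed T) {e f : Event} (he : e ∈ T) (hf : f ∈ T)
    (hne : e ≠ f) (htid : e.tid = f.tid) : HB T e f ∨ HB T f e := by
  rcases lt_trichotomy e.pos f.pos with h | h | h
  · exact Or.inl (.single (Or.inl ⟨he, hf, htid, h⟩))
  · exact absurd (hwf.eq_of_pos_eq he hf h) hne
  · exact Or.inr (.single (Or.inl ⟨hf, he, htid.symm, h⟩))

theorem injOn_tid_of_isAntichain (hwf : WellFormed T) {S : Set Event}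
    (hST : ∀ e ∈ S, e ∈ T) (hS : IsAntichain (HB T) S) : Set.InjOn Event.tid S := by
  intro e he f hf htid
  by_contra hne
  rcases hwf.hb_or_hb_of_tid_eq (hST e he) (hST f hf) hne htid with h | h
  · exact hS he hf hne h
  · exact hS hf he (Ne.symm hne) h

theorem ncard_le_card_tids_of_isAntichain (hwf : WellFormed T) {S : Set Event}
    (hST : ∀ e ∈ S, e ∈ T) (hS : IsAntichain (HB T) S) :
    S.ncard ≤ (T.map Event.tid).toFinset.card := by
  rw [← Set.ncard_coe_finset]
  refine Set.ncard_le_ncard_of_injOn Event.tid (fun e he => ?_)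
    (hwf.injOn_tid_of_isAntichain hST hS)
  simpa using ⟨e, hST e he, rfl⟩

end WellFormed

theorem isAntichain_W1 (T : List Event) (x : ℕ) (r : Event) : IsAntichain (HB T) (W1 T x r) :=
  fun _ hw _ hw' hne => hw.2.2.2 _ hw'.1 hne.symm hw'.2.1 hw'.2.2.1

theorem isAntichain_W2 (T : List Event) (x : ℕ) (r : Event) : IsAntichain (HB T) (W2 T x r) :=
  fun _ hw _ hw' hne => hw.2.2.2 _ hw'.1 hne.symm hw'.2.1 hw'.2.2.1

theorem stmt1_general (T : List Event) (hwf : WellFormed T) (x : ℕ) (r : Event) :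
    (W1 T x r).ncard ≤ (T.map Event.tid).toFinset.card ∧
    (W2 T x r).ncard ≤ (T.map Event.tid).toFinset.card :=
  ⟨hwf.ncard_le_card_tids_of_isAntichain (fun _ hw => hw.1) (isAntichain_W1 T x r),
    hwf.ncard_le_card_tids_of_isAntichain (fun _ hw => hw.1) (isAntichain_W2 T x r)⟩

/-- the number of unsynchronized (resp. synchronized) WRD candidates of a
    read is at most the number of distinct thread identifiers used by events of `T`. -/
theorem stmt1 (T : List Event) (hwf : WellFormed T) (x : ℕ) (r : Event)
    (hr : r ∈ T) (hrx : r.op = Op.read x) :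
    (W1 T x r).ncard ≤ (T.map Event.tid).toFinset.card ∧
    (W2 T x r).ncard ≤ (T.map Event.tid).toFinset.card :=
  stmt1_general T hwf x r
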